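/- arXiv:1711.00332 — 8 statements merged into one kernel-verified Lean document; each statement's English description precedes it below -/
import Mathlib

section
/- Let A be an irreducible tridiagonal (d+1)×(d+1) matrix over a field F. Then the powers A^0, A^1, ..., A^d are linearly independent; consequently the minimal polynomial of A equals the characteristic polynomial of A. -/
set_option maxHeartbeats 1000000

open Polynomial

theorem stmt_1 {F : Type*} [Field F] {d : ℕ}
    (A : Matrix (Fin (d + 1)) (Fin (d + 1)) F)
    (htri : ∀ i j : Fin (d + 1), 1 < ((i : ℤ) - (j : ℤ)).natAbs → A i j = 0)
    (hirr : ∀ i j : Fin (d + 1), ((i : ℤ) - (j : ℤ)).natAbs = 1 → A i j ≠ 0) :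
    LinearIndependent F (fun r : Fin (d + 1) => A ^ (r : ℕ)) ∧
    minpoly F A = A.charpoly := by
  -- entries far above diagonal vanish in powers
  have hzero : ∀ (k : ℕ) (i j : Fin (d + 1)), (i : ℕ) + k < (j : ℕ) → (A ^ k) i j = 0 := by
    intro k
    induction k with
    | zero =>
      intro i j h
      simp only [pow_zero, Matrix.one_apply]
      rw [if_neg]
      intro hij; subst hij; omega
    | succ k ih =>
      intro i j h
      rw [pow_succ, Matrix.mul_apply]
      apply Finset.sum_eq_zero
      intro x _
      rcases lt_or_ge ((i : ℕ) + k) (x : ℕ) with hx | hx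
      · rw [ih i x hx, zero_mul]
      · rw [htri x j (by omega), mul_zero]
  -- first-row entries on the k-th superdiagonal are nonzero
  have hnz : ∀ (k : ℕ) (hk : k ≤ d), (A ^ k) 0 ⟨k, by omega⟩ ≠ 0 := by
    intro k
    induction k with
    | zero => intro _; simp [Matrix.one_apply]
    | succ k ih =>
      intro hk
      rw [pow_succ, Matrix.mul_apply]
      rw [Finset.sum_eq_single (⟨k, by omega⟩ : Fin (d + 1))]
      · exact mul_ne_zero (ih (by omega)) (hirr _ _ (by simp))
      · intro x _ hx
        rcases lt_or_ge ((0 : Fin (d+1)) + k : ℕ) (x : ℕ) with h1 | h1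
        · rw [hzero k 0 x (by simpa using h1), zero_mul]
        · have : (x : ℕ) < k := by
            rcases lt_or_eq_of_le h1 with h | h
            · simpa using h
            · exfalso; apply hx; apply Fin.ext; simpa using h
          rw [htri x ⟨k + 1, by omega⟩ (by simp; omega), mul_zero]
      · intro h; exact absurd (Finset.mem_univ _) h
  have hli : LinearIndependent F (fun r : Fin (d + 1) => A ^ (r : ℕ)) := by
    rw [Fintype.linearIndependent_iff]
    intro g hg
    have key : ∀ r : Fin (d + 1), (∀ s : Fin (d + 1), (r : ℕ) < (s : ℕ) → g s = 0) → g r = 0 := by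
      intro r hr
      have := congrFun (congrFun hg 0) r
      simp only [Matrix.sum_apply, Matrix.smul_apply, smul_eq_mul,
        Matrix.zero_apply] at this
      rw [Finset.sum_eq_single r] at this
      · rcases mul_eq_zero.mp this with h | h
        · exact h
        · exact absurd h (by
            have := hnz (r : ℕ) (by omega)
            convert this using 3)
      · intro s _ hs
        rcases lt_or_ge (r : ℕ) (s : ℕ) with h | h
        · rw [hr s h, zero_mul]
        · have : (s : ℕ) < (r : ℕ) := by
            rcases lt_or_eq_of_le h with h | h
            · exact h
            · exact absurd (Fin.ext h) hs
          rw [hzero (s : ℕ) 0 r (by simpa using this), mul_zero]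
      · intro h; exact absurd (Finset.mem_univ _) h
    have main : ∀ n : ℕ, ∀ r : Fin (d + 1), d ≤ (r : ℕ) + n → g r = 0 := by
      intro n
      induction n with
      | zero =>
        intro r hr
        exact key r (fun s hs => by omega)
      | succ n ih =>
        intro r hr
        exact key r (fun s hs => ih s (by omega))
    intro r
    exact main d r (by omega)
  refine ⟨hli, ?_⟩
  have hint : IsIntegral F A := (Algebra.IsIntegral.of_finite F _).isIntegral A
  have hmono := minpoly.monic hint
  have hdvd : minpoly F A ∣ A.charpoly := minpoly.dvd F A (Matrix.aeval_self_charpoly A)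
  have hcdeg : A.charpoly.natDegree = d + 1 := by
    rw [Matrix.charpoly_natDegree_eq_dim]; simp
  have hdeg : d + 1 ≤ (minpoly F A).natDegree := by
    by_contra h
    push_neg at h
    have h' : (minpoly F A).natDegree < d + 1 := h
    have hz := minpoly.aeval F A
    rw [aeval_eq_sum_range' h', ← Fin.sum_univ_eq_sum_range] at hz
    have h2 := Fintype.linearIndependent_iff.mp hli (fun r => (minpoly F A).coeff r) hz
    have h3 := h2 ⟨(minpoly F A).natDegree, h'⟩
    simp only [hmono.coeff_natDegree] at h3
    exact one_ne_zero h3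
  have hle : A.charpoly.natDegree ≤ (minpoly F A).natDegree := by rw [hcdeg]; exact hdeg
  have hlc : (minpoly F A).leadingCoeff = A.charpoly.leadingCoeff := by
    rw [hmono.leadingCoeff, (A.charpoly_monic).leadingCoeff]
  exact eq_of_dvd_of_natDegree_le_of_leadingCoeff hdvd hle hlc
end

section
/- Let A be an irreducible tridiagonal (d+1)×(d+1) matrix over a field F, and let E*_0 be the diagonal matrix with (0,0)-entry 1 and all other entries 0. Then the (d+1)^2 matrices {A^r E*_0 A^s : 0 ≤ r,s ≤ d} form a basis for the F-vector space Mat_{d+1}(F). -/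
/-!
With `e₀` the first standard basis vector, `A ^ r * E*₀ * A ^ s` is the outer product of
`A ^ r e₀` and `(Aᵀ) ^ s e₀`, so it equals `K * E_rs * Lᵀ`, where the Krylov matrices `K` and `L`
have columns `A ^ r e₀` and `(Aᵀ) ^ r e₀`. As `A` has zeros below its subdiagonal and nonzero
subdiagonal, `A ^ r e₀` is supported on `{0, …, r}` with nonzero `r`-th entry, so `K` is upper
triangular with nonzero diagonal, hence invertible; the same holds for `L` because `A` is
tridiagonal. Thus `M ↦ K * M * Lᵀ` is a linear automorphism sending the standard basis `E_rs`
onto the family.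
-/

namespace Matrix

theorem mul_single_one_mul {α l m n o : Type*} [Semiring α] [Fintype m] [DecidableEq m]
    [Fintype n] [DecidableEq n] (P : Matrix l m α) (Q : Matrix n o α) (i : m) (j : n) :
    P * single i j (1 : α) * Q = vecMulVec (P.col i) (Q.row j) := by
  rw [single_eq_single_vecMulVec_single, mul_vecMulVec, vecMulVec_mul, mulVec_single_one,
    single_one_vecMul]

section BasisMulSingleMul

variable {R m : Type*} [CommRing R] [Fintype m] [DecidableEq m]

noncomputable def basisMulSingleMul (P Q : (Matrix m m R)ˣ) :
    Module.Basis (m × m) R (Matrix m m R) :=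
  (stdBasis R m m).map ((P.mulLeftLinearEquiv R _).trans (Q.mulRightLinearEquiv R))

theorem coe_basisMulSingleMul (P Q : (Matrix m m R)ˣ) :
    ⇑(basisMulSingleMul P Q) =
      fun p => (P : Matrix m m R) * single p.1 p.2 1 * (Q : Matrix m m R) := by
  ext1 ⟨i, j⟩
  simp [basisMulSingleMul, stdBasis_eq_single]

end BasisMulSingleMul

section Krylov

variable {R : Type*} {n : ℕ} [NeZero n]

def krylovMatrix [Semiring R] (A : Matrix (Fin n) (Fin n) R) : Matrix (Fin n) (Fin n) R :=
  of fun i r => (A ^ (r : ℕ)) i 0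

variable {A : Matrix (Fin n) (Fin n) R}

theorem pow_apply_zero_eq_zero_of_lt [Semiring R]
    (hlow : ∀ i j : Fin n, (j : ℕ) + 1 < i → A i j = 0) {r : ℕ} {i : Fin n} (hri : r < i) :
    (A ^ r) i 0 = 0 := by
  induction r generalizing i with
  | zero => exact one_apply_ne fun h => by simp [h] at hri
  | succ r ih =>
    rw [pow_succ', mul_apply]
    refine Finset.sum_eq_zero fun k _ => ?_
    rcases lt_or_ge r k with hrk | hkr
    · rw [ih hrk, mul_zero]
    · rw [hlow i k (by omega), zero_mul]

theorem pow_apply_zero_ne_zero [Semiring R] [IsDomain R]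
    (hlow : ∀ i j : Fin n, (j : ℕ) + 1 < i → A i j = 0)
    (hsub : ∀ i j : Fin n, (i : ℕ) = j + 1 → A i j ≠ 0) (i : Fin n) :
    (A ^ (i : ℕ)) i 0 ≠ 0 := by
  obtain ⟨r, hr⟩ := i
  induction r with
  | zero => simp
  | succ r ih =>
    have hr' : r < n := by omega
    rw [pow_succ', mul_apply, Finset.sum_eq_single ⟨r, hr'⟩]
    · exact mul_ne_zero (hsub _ _ rfl) (ih hr')
    · intro k _ hk
      rcases lt_or_ge r k with hrk | hkr
      · rw [pow_apply_zero_eq_zero_of_lt hlow hrk, mul_zero]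
      · have hkr' : (k : ℕ) < r := lt_of_le_of_ne hkr fun h => hk (Fin.ext h)
        rw [hlow _ k (by simpa using hkr'), zero_mul]
    · simp

theorem krylovMatrix_isUpperTriangular [Semiring R]
    (hlow : ∀ i j : Fin n, (j : ℕ) + 1 < i → A i j = 0) : (krylovMatrix A).IsUpperTriangular :=
  fun _ _ hri => pow_apply_zero_eq_zero_of_lt hlow hri

theorem isUnit_krylovMatrix [Field R] (hlow : ∀ i j : Fin n, (j : ℕ) + 1 < i → A i j = 0)
    (hsub : ∀ i j : Fin n, (i : ℕ) = j + 1 → A i j ≠ 0) : IsUnit (krylovMatrix A) := by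
  rw [isUnit_iff_isUnit_det, det_of_isUpperTriangular (krylovMatrix_isUpperTriangular hlow),
    isUnit_iff_ne_zero]
  exact Finset.prod_ne_zero_iff.mpr fun i _ => pow_apply_zero_ne_zero hlow hsub i

theorem pow_mul_single_mul_pow [CommSemiring R] (A : Matrix (Fin n) (Fin n) R) (r s : Fin n) :
    A ^ (r : ℕ) * single 0 0 1 * A ^ (s : ℕ) =
      krylovMatrix A * single r s 1 * (krylovMatrix Aᵀ)ᵀ := by
  rw [mul_single_one_mul, mul_single_one_mul]
  congr 1
  ext j
  simp [krylovMatrix, ← transpose_pow]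

end Krylov

end Matrix

open Matrix

theorem stmt_2 {F : Type*} [Field F] {d : ℕ}
    (A : Matrix (Fin (d + 1)) (Fin (d + 1)) F)
    (htri : ∀ i j : Fin (d + 1), 1 < ((i : ℤ) - (j : ℤ)).natAbs → A i j = 0)
    (hirr : ∀ i j : Fin (d + 1), ((i : ℤ) - (j : ℤ)).natAbs = 1 → A i j ≠ 0)
    (Es0 : Matrix (Fin (d + 1)) (Fin (d + 1)) F)
    (hEs0 : Es0 = Matrix.single 0 0 1) :
    LinearIndependent F
      (fun p : Fin (d + 1) × Fin (d + 1) => A ^ (p.1 : ℕ) * Es0 * A ^ (p.2 : ℕ)) ∧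
    Submodule.span F
      (Set.range (fun p : Fin (d + 1) × Fin (d + 1) =>
        A ^ (p.1 : ℕ) * Es0 * A ^ (p.2 : ℕ))) = ⊤ := by
  subst hEs0
  have hP := isUnit_krylovMatrix (A := A) (fun i j h => htri i j (by omega))
    (fun i j h => hirr i j (by omega))
  have hQ := isUnit_krylovMatrix (A := Aᵀ) (fun i j h => htri j i (by omega))
    (fun i j h => hirr j i (by omega))
  set b := basisMulSingleMul hP.unit ((isUnit_transpose _).mpr hQ).unit
  have hb : (fun p : Fin (d + 1) × Fin (d + 1) => A ^ (p.1 : ℕ) * single 0 0 1 * A ^ (p.2 : ℕ))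
      = b := by
    simp only [b, coe_basisMulSingleMul, IsUnit.unit_spec, pow_mul_single_mul_pow]
  rw [hb]
  exact ⟨b.linearIndependent, b.span_eq⟩
end

section
/- Let A be an irreducible tridiagonal (d+1)×(d+1) matrix over a field F, and let A* = diag(θ*_0, ..., θ*_d) with θ*_0 ≠ θ*_i for 1 ≤ i ≤ d. Then A and A* generate the F-algebra Mat_{d+1}(F), and there is no subspace W of F^{d+1} with 0 ≠ W ≠ F^{d+1} that is invariant under both A and A*. -/
/-!
The Lagrange polynomial of `A*` at `θ*_0` is the matrix unit `E₀₀ = e₀ e₀ᵀ`. Because `A` is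
irreducible tridiagonal, the vector `Aᵏ e₀` vanishes below position `k` and is nonzero at `k`, so
the Krylov vectors `Aᵏ e₀`, and likewise the rows `e₀ᵀ Aᵏ`, form bases. The products
`Aⁱ E₀₀ Aʲ = (Aⁱ e₀)(e₀ᵀ Aʲ)` therefore span all of `Mat_{d+1}(F)`. A subspace invariant under
`A` and `A*` is then invariant under every matrix, hence trivial.
-/

namespace Matrix

section Hessenberg

variable {R : Type*} [Semiring R] {n : ℕ} {A : Matrix (Fin n) (Fin n) R}

theorem pow_apply_eq_zero_of_add_lt (hA : ∀ i j : Fin n, (j : ℕ) + 1 < i → A i j = 0)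
    (k : ℕ) {i j : Fin n} (h : (j : ℕ) + k < i) : (A ^ k) i j = 0 := by
  induction k generalizing i with
  | zero => exact one_apply_ne (by rintro rfl; omega)
  | succ k ih =>
    rw [pow_succ', mul_apply]
    refine Finset.sum_eq_zero fun m _ => ?_
    by_cases hm : (j : ℕ) + k < m
    · rw [ih hm, mul_zero]
    · rw [hA i m (by omega), zero_mul]

theorem pow_apply_ne_zero_of_eq_add [NoZeroDivisors R] [Nontrivial R]
    (hA : ∀ i j : Fin n, (j : ℕ) + 1 < i → A i j = 0)
    (hsub : ∀ i j : Fin n, (i : ℕ) = j + 1 → A i j ≠ 0)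
    (k : ℕ) {i j : Fin n} (h : (i : ℕ) = j + k) : (A ^ k) i j ≠ 0 := by
  induction k generalizing i with
  | zero => rw [show i = j from Fin.ext h, pow_zero, one_apply_eq]; exact one_ne_zero
  | succ k ih =>
    let m : Fin n := ⟨j + k, by omega⟩
    rw [pow_succ', mul_apply, Finset.sum_eq_single m]
    · exact mul_ne_zero (hsub i m (by simp [m]; omega)) (ih rfl)
    · intro b _ hb
      by_cases hjb : (j : ℕ) + k < b
      · rw [pow_apply_eq_zero_of_add_lt hA k hjb, mul_zero]
      · have : (b : ℕ) ≠ j + k := fun h => hb (Fin.ext h)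
        rw [hA i b (by omega), zero_mul]
    · exact fun h => absurd (Finset.mem_univ m) h

end Hessenberg

theorem span_range_eq_top_of_triangular {K ι : Type*} [Field K] [Fintype ι] [LinearOrder ι]
    (v : ι → ι → K) (hzero : ∀ k j, k < j → v k j = 0) (hdiag : ∀ k, v k k ≠ 0) :
    Submodule.span K (Set.range v) = ⊤ := by
  classical
  have hM : (of v)ᵀ.IsUpperTriangular := fun i j hji => hzero j i hji
  have hunit : IsUnit (of v)ᵀ := by
    rw [isUnit_iff_isUnit_det, det_of_isUpperTriangular hM, isUnit_iff_ne_zero]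
    exact Finset.prod_ne_zero_iff.mpr fun k _ => hdiag k
  rw [← mulVec_surjective_iff_isUnit] at hunit
  rw [← LinearMap.range_eq_top (f := mulVecLin (of v)ᵀ) |>.mpr hunit, range_mulVecLin]
  rfl

theorem span_range_pow_mulVec_single_eq_top {K : Type*} [Field K] {d : ℕ}
    {A : Matrix (Fin (d + 1)) (Fin (d + 1)) K}
    (hA : ∀ i j : Fin (d + 1), (j : ℕ) + 1 < i → A i j = 0)
    (hsub : ∀ i j : Fin (d + 1), (i : ℕ) = j + 1 → A i j ≠ 0) :
    Submodule.span K (Set.range fun k : Fin (d + 1) => A ^ (k : ℕ) *ᵥ Pi.single 0 1) = ⊤ := by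
  refine span_range_eq_top_of_triangular _ (fun k j hkj => ?_) fun k => ?_
  · rw [mulVec_single_one]
    exact pow_apply_eq_zero_of_add_lt hA k (by simpa using hkj)
  · rw [mulVec_single_one]
    exact pow_apply_ne_zero_of_eq_add hA hsub k (by simp)

section Subalgebra

variable {R n ι : Type*} [CommSemiring R] [Fintype n] [DecidableEq n]
  (S : Subalgebra R (Matrix n n R))

theorem exists_mem_mulVec_eq_of_span_eq_top (x : n → R) (M : ι → Matrix n n R)
    (hM : ∀ k, M k ∈ S) (hspan : Submodule.span R (Set.range fun k => M k *ᵥ x) = ⊤)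
    (u : n → R) : ∃ N ∈ S, N *ᵥ x = u := by
  have hu : u ∈ Submodule.span R (Set.range fun k => M k *ᵥ x) := hspan ▸ Submodule.mem_top
  induction hu using Submodule.span_induction with
  | mem _ h => obtain ⟨k, rfl⟩ := h; exact ⟨M k, hM k, rfl⟩
  | zero => exact ⟨0, S.zero_mem, zero_mulVec x⟩
  | add _ _ _ _ h₁ h₂ =>
    obtain ⟨N₁, hN₁, rfl⟩ := h₁
    obtain ⟨N₂, hN₂, rfl⟩ := h₂
    exact ⟨N₁ + N₂, S.add_mem hN₁ hN₂, add_mulVec N₁ N₂ x⟩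
  | smul c _ _ h =>
    obtain ⟨N, hN, rfl⟩ := h
    exact ⟨c • N, S.smul_mem hN c, smul_mulVec c N x⟩

theorem exists_mem_vecMul_eq_of_span_eq_top (x : n → R) (M : ι → Matrix n n R)
    (hM : ∀ k, M k ∈ S) (hspan : Submodule.span R (Set.range fun k => x ᵥ* M k) = ⊤)
    (u : n → R) : ∃ N ∈ S, x ᵥ* N = u := by
  have hu : u ∈ Submodule.span R (Set.range fun k => x ᵥ* M k) := hspan ▸ Submodule.mem_top
  induction hu using Submodule.span_induction with
  | mem _ h => obtain ⟨k, rfl⟩ := h; exact ⟨M k, hM k, rfl⟩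
  | zero => exact ⟨0, S.zero_mem, vecMul_zero x⟩
  | add _ _ _ _ h₁ h₂ =>
    obtain ⟨N₁, hN₁, rfl⟩ := h₁
    obtain ⟨N₂, hN₂, rfl⟩ := h₂
    exact ⟨N₁ + N₂, S.add_mem hN₁ hN₂, vecMul_add N₁ N₂ x⟩
  | smul c _ _ h =>
    obtain ⟨N, hN, rfl⟩ := h
    exact ⟨c • N, S.smul_mem hN c, vecMul_smul x c N⟩

theorem subalgebra_eq_top_of_single_mem (i₀ : n) (hE : single i₀ i₀ (1 : R) ∈ S)
    (hcol : ∀ u, ∃ M ∈ S, M *ᵥ Pi.single i₀ 1 = u)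
    (hrow : ∀ u, ∃ N ∈ S, Pi.single i₀ 1 ᵥ* N = u) : S = ⊤ := by
  have hsingle : ∀ i j, single i j (1 : R) ∈ S := fun i j => by
    obtain ⟨M, hM, hMi⟩ := hcol (Pi.single i 1)
    obtain ⟨N, hN, hNj⟩ := hrow (Pi.single j 1)
    have : single i j (1 : R) = M * single i₀ i₀ 1 * N := by
      rw [single_eq_single_vecMulVec_single, single_eq_single_vecMulVec_single, mul_vecMulVec,
        vecMulVec_mul, hMi, hNj]
    exact this ▸ S.mul_mem (S.mul_mem hM hE) hN
  refine eq_top_iff.mpr fun M _ => ?_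
  rw [matrix_eq_sum_single M]
  refine S.sum_mem fun i _ => S.sum_mem fun j _ => ?_
  simpa [smul_single] using S.smul_mem (hsingle i j) (M i j)

end Subalgebra

theorem mulVec_mem_of_mem_adjoin {R n : Type*} [CommSemiring R] [Fintype n] [DecidableEq n]
    {W : Submodule R (n → R)} {s : Set (Matrix n n R)}
    (hs : ∀ M ∈ s, ∀ v ∈ W, M *ᵥ v ∈ W) {M : Matrix n n R} (hM : M ∈ Algebra.adjoin R s) :
    ∀ v ∈ W, M *ᵥ v ∈ W := by
  induction hM using Algebra.adjoin_induction with
  | mem M hM => exact hs M hM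
  | algebraMap r =>
    intro v hv
    rw [Algebra.algebraMap_eq_smul_one, smul_mulVec, one_mulVec]
    exact W.smul_mem r hv
  | add M N _ _ hM hN => exact fun v hv => add_mulVec M N v ▸ W.add_mem (hM v hv) (hN v hv)
  | mul M N _ _ hM hN => exact fun v hv => mulVec_mulVec v M N ▸ hM _ (hN v hv)

theorem submodule_eq_top_of_forall_mulVec_mem {K n : Type*} [Field K] [Fintype n] [DecidableEq n]
    {W : Submodule K (n → K)} (hW : W ≠ ⊥) (h : ∀ M : Matrix n n K, ∀ v ∈ W, M *ᵥ v ∈ W) :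
    W = ⊤ := by
  obtain ⟨v, hvW, hv⟩ := W.exists_mem_ne_zero_of_ne_bot hW
  obtain ⟨i, hvi⟩ := Function.ne_iff.mp hv
  refine eq_top_iff.mpr fun u _ => ?_
  have : vecMulVec u (Pi.single i (v i)⁻¹) *ᵥ v = u := by
    rw [vecMulVec_mulVec, single_dotProduct, inv_mul_cancel₀ hvi]
    simp
  exact this ▸ h _ v hvW

end Matrix

theorem Pi.single_one_mem_adjoin_singleton {K ι : Type*} [Field K] [Fintype ι] [DecidableEq ι]
    (θ : ι → K) (i₀ : ι) (hθ : ∀ i, i ≠ i₀ → θ i ≠ θ i₀) :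
    Pi.single i₀ 1 ∈ Algebra.adjoin K {θ} := by
  set c := ∏ i ∈ Finset.univ.erase i₀, (θ i₀ - θ i)
  have hc : c ≠ 0 := Finset.prod_ne_zero_iff.mpr fun i hi =>
    sub_ne_zero.mpr (hθ i (Finset.ne_of_mem_erase hi)).symm
  have : Pi.single i₀ 1 = c⁻¹ • ∏ i ∈ Finset.univ.erase i₀, (θ - algebraMap K (ι → K) (θ i)) := by
    funext j
    by_cases hj : j = i₀
    · subst hj; simp [Finset.prod_apply, c, inv_mul_cancel₀ hc]
    · have : ∏ i ∈ Finset.univ.erase i₀, (θ j - θ i) = 0 :=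
        Finset.prod_eq_zero (Finset.mem_erase.mpr ⟨hj, Finset.mem_univ j⟩) (sub_self _)
      simp [Finset.prod_apply, hj, this]
  rw [this]
  exact Subalgebra.smul_mem _ (Subalgebra.prod_mem _ fun i _ =>
    Subalgebra.sub_mem _ (Algebra.self_mem_adjoin_singleton K θ) (Subalgebra.algebraMap_mem _ _)) _

open Matrix

theorem stmt_3 {F : Type*} [Field F] {d : ℕ}
    (A : Matrix (Fin (d + 1)) (Fin (d + 1)) F)
    (htri : ∀ i j : Fin (d + 1), 1 < ((i : ℤ) - (j : ℤ)).natAbs → A i j = 0)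
    (hirr : ∀ i j : Fin (d + 1), ((i : ℤ) - (j : ℤ)).natAbs = 1 → A i j ≠ 0)
    (θ : Fin (d + 1) → F)
    (hθ : ∀ i : Fin (d + 1), i ≠ 0 → θ 0 ≠ θ i) :
    Algebra.adjoin F ({A, Matrix.diagonal θ} : Set (Matrix (Fin (d + 1)) (Fin (d + 1)) F)) = ⊤ ∧
    ¬ ∃ W : Submodule F (Fin (d + 1) → F), W ≠ ⊥ ∧ W ≠ ⊤ ∧
        (∀ v ∈ W, A.mulVec v ∈ W) ∧ (∀ v ∈ W, (Matrix.diagonal θ).mulVec v ∈ W) := by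
  set S := Algebra.adjoin F ({A, diagonal θ} : Set (Matrix (Fin (d + 1)) (Fin (d + 1)) F))
  have hA : A ∈ S := Algebra.subset_adjoin (by simp)
  have hE : single 0 0 (1 : F) ∈ S := by
    have h : diagonal (Pi.single 0 1) ∈ (Algebra.adjoin F {θ}).map (diagonalAlgHom F) :=
      Subalgebra.mem_map.mpr
        ⟨_, Pi.single_one_mem_adjoin_singleton θ 0 fun i hi => (hθ i hi).symm, rfl⟩
    rw [AlgHom.map_adjoin_singleton] at h
    exact Algebra.adjoin_mono (by simp) (diagonal_single (0 : Fin (d + 1)) (1 : F) ▸ h)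
  have hcol := span_range_pow_mulVec_single_eq_top (A := A)
    (fun i j h => htri i j (by omega)) (fun i j h => hirr i j (by omega))
  have hrow := span_range_pow_mulVec_single_eq_top (A := Aᵀ)
    (fun i j h => htri j i (by omega)) (fun i j h => hirr j i (by omega))
  simp only [← transpose_pow, mulVec_transpose] at hrow
  have htop : S = ⊤ := subalgebra_eq_top_of_single_mem S 0 hE
    (exists_mem_mulVec_eq_of_span_eq_top S _ _ (fun _ => pow_mem hA _) hcol)
    (exists_mem_vecMul_eq_of_span_eq_top S _ _ (fun _ => pow_mem hA _) hrow)
  refine ⟨htop, fun ⟨W, hbot, hne, hAW, hDW⟩ => hne ?_⟩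
  have hinv : ∀ M ∈ ({A, diagonal θ} : Set _), ∀ v ∈ W, M *ᵥ v ∈ W := by
    rintro M (rfl | rfl)
    exacts [hAW, hDW]
  exact submodule_eq_top_of_forall_mulVec_mem hbot fun M =>
    mulVec_mem_of_mem_adjoin hinv (htop ▸ Algebra.mem_top : M ∈ S)
end

section
/- With K = diag(k_0,...,k_d) as above (all k_i nonzero), the map † : Mat_{d+1}(F) → Mat_{d+1}(F), X ↦ K^{-1} X^t K, is an antiautomorphism of the F-algebra Mat_{d+1}(F) satisfying (X†)† = X for all X, and † is the unique antiautomorphism of Mat_{d+1}(F) fixing A and each of the diagonal idempotents E*_0,...,E*_d (where E*_i has (i,i)-entry 1 and all others 0). -/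
/-! The map `X ↦ K⁻¹ Xᵀ K` is the adjoint for the symmetric bilinear form with Gram matrix `K`,
hence an involutive antiautomorphism. It fixes `A` because the `k_i` are chosen so that `K A` is
symmetric: `k_{i+1} a_{i+1,i} = k_i a_{i,i+1}`.

For uniqueness, if `ξ` is another antiautomorphism fixing `A` and every `E*_i`, then `φ = † ∘ ξ`
is an algebra endomorphism with the same fixed points. Sandwiching between the `E*_i` gives
`φ(E_ij) = c_ij E_ij`, where `c` is a multiplicative cocycle with `c_ii = 1`. Fixing `A` forces
`c_{i,i+1} = 1` because `A` is irreducible, and then the cocycle identity gives `c ≡ 1`, i.e.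
`φ = id`. -/

namespace Matrix

section FormAdjoint

variable {n R : Type*} [Fintype n] [DecidableEq n] [CommRing R]

/-- The adjoint for the bilinear form `(u, v) ↦ uᵀ K v`. -/
noncomputable def formAdjoint (K : Matrix n n R) : Matrix n n R →ₗ[R] Matrix n n R where
  toFun X := K⁻¹ * Xᵀ * K
  map_add' X Y := by rw [transpose_add, Matrix.mul_add, Matrix.add_mul]
  map_smul' c X := by rw [transpose_smul, Matrix.mul_smul, Matrix.smul_mul]; rfl

theorem formAdjoint_apply (K X : Matrix n n R) : formAdjoint K X = K⁻¹ * Xᵀ * K := rfl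

variable {K : Matrix n n R}

theorem formAdjoint_mul (hK : IsUnit K.det) (X Y : Matrix n n R) :
    formAdjoint K (X * Y) = formAdjoint K Y * formAdjoint K X := by
  simp only [formAdjoint_apply, transpose_mul, Matrix.mul_assoc,
    mul_nonsing_inv_cancel_left _ _ hK]

theorem formAdjoint_formAdjoint (hK : IsUnit K.det) (hKs : Kᵀ = K) (X : Matrix n n R) :
    formAdjoint K (formAdjoint K X) = X := by
  simp only [formAdjoint_apply, transpose_mul, transpose_transpose, transpose_nonsing_inv, hKs,
    Matrix.mul_assoc, nonsing_inv_mul_cancel_left _ _ hK, nonsing_inv_mul _ hK, Matrix.mul_one]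

theorem formAdjoint_eq_self_of_isSymm (hK : IsUnit K.det) (hKs : Kᵀ = K) {A : Matrix n n R}
    (hA : (K * A).IsSymm) : formAdjoint K A = A := by
  rw [formAdjoint_apply, Matrix.mul_assoc, ← hKs, ← transpose_mul, hA.eq, hKs,
    nonsing_inv_mul_cancel_left _ _ hK]

end FormAdjoint

section Diagonal

variable {n F : Type*} [Fintype n] [DecidableEq n] [Field F] {w : n → F}

theorem isUnit_det_diagonal (hw : ∀ i, w i ≠ 0) : IsUnit (diagonal w).det := by
  simpa [det_diagonal, Finset.prod_ne_zero_iff] using hw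

theorem formAdjoint_diagonal_apply (hw : ∀ i, w i ≠ 0) (X : Matrix n n F) (i j : n) :
    formAdjoint (diagonal w) X i j = (w i)⁻¹ * X j i * w j := by
  have hinv : (diagonal w)⁻¹ = diagonal fun i => (w i)⁻¹ :=
    inv_eq_left_inv (by simp [hw, ← diagonal_one])
  simp [formAdjoint_apply, hinv]

theorem formAdjoint_diagonal_single_same (hw : ∀ i, w i ≠ 0) (i : n) (c : F) :
    formAdjoint (diagonal w) (single i i c) = single i i c := by
  ext a b
  rw [formAdjoint_diagonal_apply hw]
  by_cases ha : a = i <;> by_cases hb : b = i <;> simp [ha, hb, Ne.symm, mul_right_comm _ c, hw]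

end Diagonal

section Endomorphism

variable {n R : Type*} [Fintype n] [DecidableEq n] [CommRing R]
  {φ : Matrix n n R →ₗ[R] Matrix n n R}

theorem map_single_eq_smul_single (hmul : ∀ X Y, φ (X * Y) = φ X * φ Y)
    (hE : ∀ i, φ (single i i 1) = single i i 1) (i j : n) :
    φ (single i j 1) = φ (single i j 1) i j • single i j 1 := by
  have h := congrArg φ (single_mul_mul_single i i j j (1 : R) (single i j 1) 1).symm
  rw [hmul, hmul, hE, hE, single_mul_mul_single] at h
  simpa [smul_single] using h

theorem map_single_apply_trans (hmul : ∀ X Y, φ (X * Y) = φ X * φ Y)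
    (hE : ∀ i, φ (single i i 1) = single i i 1) (i j l : n) :
    φ (single i l 1) i l = φ (single i j 1) i j * φ (single j l 1) j l := by
  have h := congrArg φ (single_mul_single_same (1 : R) i j l 1)
  rw [mul_one, hmul, map_single_eq_smul_single hmul hE i j,
    map_single_eq_smul_single hmul hE j l] at h
  simpa using (congrFun (congrFun h i) l).symm

theorem map_single_apply_eq_one [NoZeroDivisors R] (hmul : ∀ X Y, φ (X * Y) = φ X * φ Y)
    (hE : ∀ i, φ (single i i 1) = single i i 1) {A : Matrix n n R} (hA : φ A = A) {i j : n}
    (hij : A i j ≠ 0) : φ (single i j 1) i j = 1 := by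
  have hsandwich : single i i 1 * A * single j j 1 = A i j • single i j (1 : R) := by
    simp [smul_single]
  have h := congrArg φ hsandwich
  rw [hmul, hmul, hE, hE, hA, hsandwich, map_smul, map_single_eq_smul_single hmul hE,
    smul_smul] at h
  simpa [hij] using congrFun (congrFun h i) j

end Endomorphism

theorem _root_.Fin.cocycle_eq_one {M : Type*} [Monoid M] {d : ℕ}
    {c : Fin (d + 1) → Fin (d + 1) → M}
    (hc : ∀ i j l, c i l = c i j * c j l) (hdiag : ∀ i, c i i = 1)
    (hsucc : ∀ m : Fin d, c m.castSucc m.succ = 1) (i j : Fin (d + 1)) : c i j = 1 := by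
  have from_zero : ∀ j, c 0 j = 1 := fun j => by
    induction j using Fin.induction with
    | zero => exact hdiag 0
    | succ m ih => rw [hc 0 m.castSucc, ih, hsucc, one_mul]
  have to_zero : c i 0 = 1 :=
    calc c i 0 = c i 0 * c 0 i := by rw [from_zero, mul_one]
      _ = 1 := by rw [← hc, hdiag]
  rw [hc i 0, to_zero, from_zero, one_mul]

theorem linearMap_eq_id_of_map_mul {R : Type*} [CommRing R] [NoZeroDivisors R] {d : ℕ}
    {φ : Matrix (Fin (d + 1)) (Fin (d + 1)) R →ₗ[R] Matrix (Fin (d + 1)) (Fin (d + 1)) R}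
    (hmul : ∀ X Y, φ (X * Y) = φ X * φ Y) (hE : ∀ i, φ (single i i 1) = single i i 1)
    {A : Matrix (Fin (d + 1)) (Fin (d + 1)) R} (hA : φ A = A)
    (hsup : ∀ m : Fin d, A m.castSucc m.succ ≠ 0) : φ = LinearMap.id := by
  refine ext_linearMap R fun i j => LinearMap.ext_ring ?_
  have hone : φ (single i j 1) i j = 1 :=
    Fin.cocycle_eq_one (c := fun i j => φ (single i j 1) i j) (map_single_apply_trans hmul hE)
      (fun i => by simp [hE]) (fun m => map_single_apply_eq_one hmul hE hA (hsup m)) i j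
  simp [map_single_eq_smul_single hmul hE i j, hone]

end Matrix

open Matrix

section Tridiagonal

variable {F : Type*} [Field F] {d : ℕ} {A : Matrix (Fin (d + 1)) (Fin (d + 1)) F}
  {k : Fin (d + 1) → F}

theorem Fin.filter_val_lt_succ (m : Fin d) :
    Finset.univ.filter (fun j : Fin d => (j : ℕ) < (m.succ : ℕ)) =
      insert m (Finset.univ.filter fun j : Fin d => (j : ℕ) < (m.castSucc : ℕ)) := by
  ext j
  simp only [Finset.mem_filter, Finset.mem_univ, true_and, Finset.mem_insert, Fin.val_succ,
    Fin.val_castSucc, Fin.ext_iff]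
  omega

theorem succ_mul_eq_castSucc_mul (hsub : ∀ m : Fin d, A m.succ m.castSucc ≠ 0)
    (hk : ∀ i : Fin (d + 1), k i =
      (∏ j ∈ Finset.univ.filter (fun j : Fin d => (j : ℕ) < (i : ℕ)), A j.castSucc j.succ) /
      (∏ j ∈ Finset.univ.filter (fun j : Fin d => (j : ℕ) < (i : ℕ)), A j.succ j.castSucc))
    (m : Fin d) : k m.succ * A m.succ m.castSucc = k m.castSucc * A m.castSucc m.succ := by
  have hm : m ∉ Finset.univ.filter fun j : Fin d => (j : ℕ) < (m.castSucc : ℕ) := by simp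
  rw [hk, hk, Fin.filter_val_lt_succ, Finset.prod_insert hm, Finset.prod_insert hm]
  field_simp [hsub m]

theorem isSymm_diagonal_mul_of_tridiagonal
    (htri : ∀ i j : Fin (d + 1), 1 < ((i : ℤ) - (j : ℤ)).natAbs → A i j = 0)
    (hstep : ∀ m : Fin d, k m.succ * A m.succ m.castSucc = k m.castSucc * A m.castSucc m.succ) :
    (diagonal k * A).IsSymm := by
  refine IsSymm.ext fun i j => ?_
  simp only [diagonal_mul]
  wlog hij : i ≤ j generalizing i j
  · exact (this j i (le_of_not_ge hij)).symm
  rcases (show (j : ℕ) = i ∨ (j : ℕ) = i + 1 ∨ (i : ℕ) + 1 < j by omega) with h | h | h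
  · rw [Fin.ext h]
  · obtain ⟨m, rfl, rfl⟩ : ∃ m : Fin d, i = m.castSucc ∧ j = m.succ :=
      ⟨⟨i, by omega⟩, Fin.ext rfl, Fin.ext h⟩
    exact hstep m
  · rw [htri i j (by omega), htri j i (by omega), mul_zero, mul_zero]

end Tridiagonal

theorem isLinearMap_of_map_smul_add {R M M₂ : Type*} [Semiring R] [AddCommMonoid M]
    [AddCommGroup M₂] [Module R M] [Module R M₂] {f : M → M₂}
    (hf : ∀ (c : R) x y, f (c • x + y) = c • f x + f y) : IsLinearMap R f := by
  have h0 : f 0 = 0 := by simpa using hf 1 0 0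
  exact ⟨fun x y => by simpa using hf 1 x y, fun c x => by simpa [h0] using hf c x 0⟩

theorem stmt_5 {F : Type*} [Field F] {d : ℕ}
    (A : Matrix (Fin (d + 1)) (Fin (d + 1)) F)
    (htri : ∀ i j : Fin (d + 1), 1 < ((i : ℤ) - (j : ℤ)).natAbs → A i j = 0)
    (hirr : ∀ i j : Fin (d + 1), ((i : ℤ) - (j : ℤ)).natAbs = 1 → A i j ≠ 0)
    (k : Fin (d + 1) → F)
    (hk : ∀ i : Fin (d + 1), k i =
      (∏ j ∈ Finset.univ.filter (fun j : Fin d => (j : ℕ) < (i : ℕ)), A j.castSucc j.succ) /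
      (∏ j ∈ Finset.univ.filter (fun j : Fin d => (j : ℕ) < (i : ℕ)), A j.succ j.castSucc))
    (hknz : ∀ i, k i ≠ 0)
    (K : Matrix (Fin (d + 1)) (Fin (d + 1)) F) (hK : K = Matrix.diagonal k)
    (dag : Matrix (Fin (d + 1)) (Fin (d + 1)) F → Matrix (Fin (d + 1)) (Fin (d + 1)) F)
    (hdag : ∀ X, dag X = K⁻¹ * X.transpose * K) :
    (∀ X Y, dag (X * Y) = dag Y * dag X) ∧
    (∀ (c : F) (X Y), dag (c • X + Y) = c • dag X + dag Y) ∧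
    Function.Bijective dag ∧
    (∀ X, dag (dag X) = X) ∧
    dag A = A ∧
    (∀ i : Fin (d + 1), dag (Matrix.single i i 1) = Matrix.single i i 1) ∧
    (∀ ξ : Matrix (Fin (d + 1)) (Fin (d + 1)) F → Matrix (Fin (d + 1)) (Fin (d + 1)) F,
      (∀ X Y, ξ (X * Y) = ξ Y * ξ X) →
      (∀ (c : F) (X Y), ξ (c • X + Y) = c • ξ X + ξ Y) →
      Function.Bijective ξ →
      ξ A = A →
      (∀ i : Fin (d + 1), ξ (Matrix.single i i 1) = Matrix.single i i 1) →
      ξ = dag) := by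
  subst hK
  obtain rfl : dag = formAdjoint (diagonal k) := funext hdag
  have hunit := isUnit_det_diagonal hknz
  have hinv : Function.Involutive (formAdjoint (diagonal k)) :=
    formAdjoint_formAdjoint hunit (diagonal_transpose k)
  have hsub (m : Fin d) : A m.succ m.castSucc ≠ 0 := hirr _ _ (by simp)
  have hsup (m : Fin d) : A m.castSucc m.succ ≠ 0 := hirr _ _ (by simp)
  have hfixA : formAdjoint (diagonal k) A = A :=
    formAdjoint_eq_self_of_isSymm hunit (diagonal_transpose k)
      (isSymm_diagonal_mul_of_tridiagonal htri (succ_mul_eq_castSucc_mul hsub hk))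
  have hfixE := formAdjoint_diagonal_single_same hknz (c := 1)
  refine ⟨formAdjoint_mul hunit, fun c X Y => by simp, hinv.bijective, hinv, hfixA, hfixE, ?_⟩
  intro ξ hmul hlin _ hA hE
  have hid :
      (formAdjoint (diagonal k)).comp (IsLinearMap.mk' ξ (isLinearMap_of_map_smul_add hlin)) =
        LinearMap.id :=
    linearMap_eq_id_of_map_mul (by simp [hmul, formAdjoint_mul hunit]) (by simp [hE, hfixE])
      (by simp [hA, hfixA]) hsup
  funext X
  rw [← hinv (ξ X)]
  exact congrArg _ (LinearMap.congr_fun hid X)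
end

section
/- Let {σ_i}_{i=0}^d be a sequence in a field F and β ∈ F. If there exists ϱ ∈ F with σ_{i-1}^2 − β σ_{i-1} σ_i + σ_i^2 = ϱ for 1 ≤ i ≤ d, and σ_{i-1} ≠ σ_{i+1} for 1 ≤ i ≤ d−1, then σ_{i-1} − β σ_i + σ_{i+1} = 0 for 1 ≤ i ≤ d−1. -/
theorem stmt_7 {F : Type*} [Field F] {d : ℕ} (β ϱ : F) (σ : ℕ → F)
    (hconst : ∀ i : ℕ, 1 ≤ i → i ≤ d →
      σ (i - 1) ^ 2 - β * σ (i - 1) * σ i + σ i ^ 2 = ϱ)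
    (hne : ∀ i : ℕ, 1 ≤ i → i + 1 ≤ d → σ (i - 1) ≠ σ (i + 1)) :
    ∀ i : ℕ, 1 ≤ i → i + 1 ≤ d → σ (i - 1) - β * σ i + σ (i + 1) = 0 := by
  intro i h1 h2
  have e1 := hconst i h1 (by omega)
  have e2 := hconst (i + 1) (by omega) h2
  simp only [Nat.add_sub_cancel] at e2
  have key : (σ (i - 1) - σ (i + 1)) * (σ (i - 1) - β * σ i + σ (i + 1)) = 0 := by
    have := e1.trans e2.symm
    ring_nf
    ring_nf at this
    linear_combination this
  rcases mul_eq_zero.mp key with h | h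
  · exact absurd (sub_eq_zero.mp h) (hne i h1 h2)
  · exact h
end

section
/- Let F be a field with Char(F) ≠ 2, β ∈ F, and let (σ_i)_{i=0}^d be a β-recurrent sequence with d ≥ 1. Then σ_1 σ_d = σ_0 σ_{d-1} if and only if the sequence is symmetric or antisymmetric. -/
private lemma rec_ext {F : Type*} [Field F] {d : ℕ} {β : F} {s t : ℕ → F}
    (hs : ∀ i, 1 ≤ i → i + 1 ≤ d → s (i - 1) - β * s i + s (i + 1) = 0)
    (ht : ∀ i, 1 ≤ i → i + 1 ≤ d → t (i - 1) - β * t i + t (i + 1) = 0)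
    (c : F) (h0 : t 0 = c * s 0) (h1 : t 1 = c * s 1) :
    ∀ i, i ≤ d → t i = c * s i := by
  intro i
  induction i using Nat.strong_induction_on with
  | _ i ih =>
    intro hid
    match i with
    | 0 => exact h0
    | 1 => exact h1
    | (n + 2) =>
      have hsn := hs (n + 1) (by omega) (by omega)
      have htn := ht (n + 1) (by omega) (by omega)
      have e1 := ih n (by omega) (by omega)
      have e2 := ih (n + 1) (by omega) (by omega)
      simp only [Nat.add_sub_cancel] at hsn htn
      linear_combination htn - c * hsn - e1 + β * e2

theorem stmt_11 {F : Type*} [Field F] (hchar : (2 : F) ≠ 0) {d : ℕ} (hd : 1 ≤ d) (β : F)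
    (σ : Fin (d + 1) → F)
    (hσ : ∀ (i : ℕ) (h1 : 1 ≤ i) (h2 : i + 1 ≤ d),
      σ ⟨i - 1, by omega⟩ - β * σ ⟨i, by omega⟩ + σ ⟨i + 1, by omega⟩ = 0) :
    σ ⟨1, by omega⟩ * σ ⟨d, by omega⟩ = σ ⟨0, by omega⟩ * σ ⟨d - 1, by omega⟩ ↔
      ((∀ i : Fin (d + 1), σ i = σ ⟨d - (i : ℕ), by omega⟩) ∨
       (∀ i : Fin (d + 1), σ i + σ ⟨d - (i : ℕ), by omega⟩ = 0)) := by
  classical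
  set s : ℕ → F := fun i => σ ⟨min i d, by omega⟩ with hsdef
  have hsσ : ∀ (i : ℕ) (hi : i ≤ d), s i = σ ⟨i, by omega⟩ := by
    intro i hi
    have h : (⟨min i d, by omega⟩ : Fin (d + 1)) = ⟨i, by omega⟩ := by
      ext; simp; omega
    rw [hsdef]
    exact congrArg σ h
  have hrecs : ∀ i, 1 ≤ i → i + 1 ≤ d → s (i - 1) - β * s i + s (i + 1) = 0 := by
    intro i h1 h2
    rw [hsσ (i - 1) (by omega), hsσ i (by omega), hsσ (i + 1) (by omega)]
    exact hσ i h1 h2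
  set t : ℕ → F := fun i => s (d - i) with htdef
  have hrect : ∀ i, 1 ≤ i → i + 1 ≤ d → t (i - 1) - β * t i + t (i + 1) = 0 := by
    intro i h1 h2
    show s (d - (i - 1)) - β * s (d - i) + s (d - (i + 1)) = 0
    set j := d - (i + 1) with hj
    have e1 : d - (i - 1) = j + 2 := by omega
    have e2 : d - i = j + 1 := by omega
    rw [e1, e2]
    have h := hrecs (j + 1) (by omega) (by omega)
    simp only [Nat.add_sub_cancel] at h
    linear_combination h
  constructor
  · intro hW
    have hW' : s 1 * t 0 = s 0 * t 1 := by
      show s 1 * s (d - 0) = s 0 * s (d - 1)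
      rw [Nat.sub_zero]
      rw [hsσ 1 hd, hsσ d le_rfl, hsσ 0 (by omega), hsσ (d - 1) (by omega)]
      exact hW
    by_cases h0 : s 0 = 0 ∧ s 1 = 0
    · left
      have hz : ∀ i, i ≤ d → s i = 0 := by
        have h := rec_ext hrecs hrecs (0 : F) (by rw [h0.1]; ring) (by rw [h0.2]; ring)
        intro i hi
        have := h i hi
        simpa using this
      intro i
      calc σ i = s (i : ℕ) := (hsσ (i : ℕ) (by omega)).symm
        _ = 0 := hz _ (by omega)
        _ = s (d - (i : ℕ)) := (hz _ (by omega)).symm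
        _ = σ ⟨d - (i : ℕ), by omega⟩ := hsσ (d - (i : ℕ)) (by omega)
    · obtain ⟨c, hc0, hc1⟩ : ∃ c : F, t 0 = c * s 0 ∧ t 1 = c * s 1 := by
        by_cases hs0 : s 0 = 0
        · have hs1 : s 1 ≠ 0 := fun h => h0 ⟨hs0, h⟩
          refine ⟨t 1 / s 1, ?_, by field_simp⟩
          have hz : s 1 * t 0 = 0 := by rw [hW', hs0]; ring
          have ht0 : t 0 = 0 := by
            rcases mul_eq_zero.mp hz with h | h
            · exact absurd h hs1
            · exact h
          rw [ht0, hs0]; ring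
        · refine ⟨t 0 / s 0, by field_simp, ?_⟩
          rw [div_mul_eq_mul_div, eq_div_iff hs0]
          linear_combination - hW'
      have htc : ∀ i, i ≤ d → t i = c * s i := rec_ext hrecs hrect c hc0 hc1
      have hsq : c * c = 1 := by
        rcases not_and_or.mp h0 with hs0 | hs1
        · have e1 : t d = s 0 := by show s (d - d) = s 0; rw [Nat.sub_self]
          have e2 : s d = t 0 := by show s d = s (d - 0); rw [Nat.sub_zero]
          have hh := htc d le_rfl
          have key : s 0 = c * c * s 0 := by
            linear_combination - e1 + hh + c * e2 + c * hc0
          have : (c * c) * s 0 = 1 * s 0 := by linear_combination - key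
          exact mul_right_cancel₀ hs0 this
        · have e1 : t (d - 1) = s 1 := by
            show s (d - (d - 1)) = s 1
            congr 1
            omega
          have e2 : s (d - 1) = t 1 := rfl
          have hh := htc (d - 1) (by omega)
          have key : s 1 = c * c * s 1 := by
            linear_combination - e1 + hh + c * e2 + c * hc1
          have : (c * c) * s 1 = 1 * s 1 := by linear_combination - key
          exact mul_right_cancel₀ hs1 this
      have hc : c = 1 ∨ c = -1 := by
        have h : (c - 1) * (c + 1) = 0 := by linear_combination hsq
        rcases mul_eq_zero.mp h with h | h
        · left; linear_combination h
        · right; linear_combination h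
      rcases hc with h | h
      · left
        intro i
        have h1 : t (i : ℕ) = s (i : ℕ) := by
          rw [htc (i : ℕ) (by omega), h, one_mul]
        calc σ i = s (i : ℕ) := (hsσ (i : ℕ) (by omega)).symm
          _ = t (i : ℕ) := h1.symm
          _ = s (d - (i : ℕ)) := rfl
          _ = σ ⟨d - (i : ℕ), by omega⟩ := hsσ (d - (i : ℕ)) (by omega)
      · right
        intro i
        have h1 : t (i : ℕ) = - s (i : ℕ) := by
          rw [htc (i : ℕ) (by omega), h]; ring
        have a1 : σ i = s (i : ℕ) := (hsσ (i : ℕ) (by omega)).symm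
        have a2 : σ ⟨d - (i : ℕ), by omega⟩ = t (i : ℕ) :=
          (hsσ (d - (i : ℕ)) (by omega)).symm
        rw [a1, a2, h1]; ring
  · rintro (h | h)
    · have e1 : s 1 = s (d - 1) := by
        rw [hsσ 1 hd, hsσ (d - 1) (by omega)]
        exact h ⟨1, by omega⟩
      have e2 : s d = s 0 := by
        have h2 : s d = s (d - d) := by
          rw [hsσ d le_rfl, hsσ (d - d) (by omega)]
          exact h ⟨d, by omega⟩
        rwa [Nat.sub_self] at h2
      rw [← hsσ 1 hd, ← hsσ d le_rfl, ← hsσ 0 (by omega), ← hsσ (d - 1) (by omega)]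
      rw [e1, e2]; ring
    · have e1 : s 1 + s (d - 1) = 0 := by
        rw [hsσ 1 hd, hsσ (d - 1) (by omega)]
        exact h ⟨1, by omega⟩
      have e2 : s d + s 0 = 0 := by
        have h2 : s d + s (d - d) = 0 := by
          rw [hsσ d le_rfl, hsσ (d - d) (by omega)]
          exact h ⟨d, by omega⟩
        rwa [Nat.sub_self] at h2
      rw [← hsσ 1 hd, ← hsσ d le_rfl, ← hsσ 0 (by omega), ← hsσ (d - 1) (by omega)]
      linear_combination s d * e1 - s (d - 1) * e2
end

section
/- Let V be a finite-dimensional vector space over F, let A ∈ End(V) be diagonalizable with distinct eigenvalues θ_0,...,θ_d and corresponding primitive idempotents (projections) E_0,...,E_d, and let A* ∈ End(V). Fix β, ϱ ∈ F. Suppose E_i A* E_j = 0 whenever |i−j| ≠ 1 and E_i A* E_j ≠ 0 whenever |i−j| = 1. Then A^2 A* − β A A* A + A* A^2 = ϱ A* holds if and only if θ_{i-1}^2 − β θ_{i-1} θ_i + θ_i^2 = ϱ for all 1 ≤ i ≤ d. -/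
theorem stmt_13 {F V : Type*} [Field F] [AddCommGroup V] [Module F V]
    [FiniteDimensional F V] {d : ℕ}
    (θ : Fin (d + 1) → F) (hθ : Function.Injective θ)
    (E : Fin (d + 1) → Module.End F V)
    (hEE : ∀ i j : Fin (d + 1), E i * E j = if i = j then E i else 0)
    (hsum : ∑ i, E i = 1)
    (A : Module.End F V) (hA : A = ∑ i, θ i • E i)
    (As : Module.End F V)
    (h0 : ∀ i j : Fin (d + 1), ((i : ℤ) - (j : ℤ)).natAbs ≠ 1 → E i * As * E j = 0)
    (h1 : ∀ i j : Fin (d + 1), ((i : ℤ) - (j : ℤ)).natAbs = 1 → E i * As * E j ≠ 0)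
    (β ϱ : F) :
    A ^ 2 * As - β • (A * As * A) + As * A ^ 2 = ϱ • As ↔
      ∀ (i : ℕ) (h1 : 1 ≤ i) (h2 : i ≤ d),
        θ ⟨i - 1, by omega⟩ ^ 2 - β * θ ⟨i - 1, by omega⟩ * θ ⟨i, by omega⟩ +
          θ ⟨i, by omega⟩ ^ 2 = ϱ := by
  have hEA : ∀ i, E i * A = θ i • E i := by
    intro i
    rw [hA, Finset.mul_sum, Finset.sum_eq_single i]
    · rw [mul_smul_comm, hEE, if_pos rfl]
    · intro j _ hj
      rw [mul_smul_comm, hEE, if_neg (Ne.symm hj), smul_zero]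
    · intro h; exact absurd (Finset.mem_univ i) h
  have hAE : ∀ j, A * E j = θ j • E j := by
    intro j
    rw [hA, Finset.sum_mul, Finset.sum_eq_single j]
    · rw [smul_mul_assoc, hEE, if_pos rfl]
    · intro i _ hi
      rw [smul_mul_assoc, hEE, if_neg hi, smul_zero]
    · intro h; exact absurd (Finset.mem_univ j) h
  have hE2 : ∀ i, E i * A ^ 2 = θ i ^ 2 • E i := by
    intro i
    rw [sq, ← mul_assoc, hEA, smul_mul_assoc, hEA, smul_smul, ← sq]
  have hA2E : ∀ j, A ^ 2 * E j = θ j ^ 2 • E j := by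
    intro j
    rw [sq, mul_assoc, hAE, mul_smul_comm, hAE, smul_smul, ← sq]
  have key : ∀ i j, E i * (A ^ 2 * As - β • (A * As * A) + As * A ^ 2) * E j
      = (θ i ^ 2 - β * (θ i * θ j) + θ j ^ 2) • (E i * As * E j) := by
    intro i j
    have expand : E i * (A ^ 2 * As - β • (A * As * A) + As * A ^ 2) * E j
        = (E i * A ^ 2) * As * E j - β • ((E i * A) * As * (A * E j))
          + E i * As * (A ^ 2 * E j) := by
      noncomm_ring
    rw [expand, hE2 i, hEA i, hAE j, hA2E j]
    simp only [smul_mul_assoc, mul_smul_comm, smul_smul]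
    module
  have keyϱ : ∀ i j, E i * (ϱ • As) * E j = ϱ • (E i * As * E j) := by
    intro i j
    rw [mul_smul_comm, smul_mul_assoc]
  constructor
  · intro h i hi1 hi2
    set a : Fin (d + 1) := ⟨i - 1, by omega⟩ with ha
    set b : Fin (d + 1) := ⟨i, by omega⟩ with hb
    have hab : (((a : Fin (d+1)) : ℤ) - ((b : Fin (d+1)) : ℤ)).natAbs = 1 := by
      have : (a : ℕ) = i - 1 := rfl
      have : (b : ℕ) = i := rfl
      simp only [ha, hb]
      omega
    have hX : E a * As * E b ≠ 0 := h1 a b hab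
    have hk := key a b
    rw [h, keyϱ] at hk
    have : (θ a ^ 2 - β * (θ a * θ b) + θ b ^ 2 - ϱ) • (E a * As * E b) = 0 := by
      rw [sub_smul, hk, sub_self]
    rcases smul_eq_zero.mp this with hc | hc
    · have hc' := sub_eq_zero.mp hc
      show θ a ^ 2 - β * θ a * θ b + θ b ^ 2 = ϱ
      linear_combination hc'
    · exact absurd hc hX
  · intro h
    rw [← sub_eq_zero]
    have hdec : ∀ T : Module.End F V, ∑ i, ∑ j, E i * T * E j = T := by
      intro T
      calc ∑ i, ∑ j, E i * T * E j = ∑ i, E i * T * (∑ j, E j) := by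
            refine Finset.sum_congr rfl fun i _ => ?_
            rw [Finset.mul_sum]
        _ = (∑ i, E i) * T * (∑ j, E j) := by
            rw [Finset.sum_mul, Finset.sum_mul]
        _ = T := by rw [hsum, one_mul, mul_one]
    rw [← hdec (A ^ 2 * As - β • (A * As * A) + As * A ^ 2 - ϱ • As)]
    refine Finset.sum_eq_zero fun i _ => Finset.sum_eq_zero fun j _ => ?_
    have term : E i * (A ^ 2 * As - β • (A * As * A) + As * A ^ 2 - ϱ • As) * E j
        = (θ i ^ 2 - β * (θ i * θ j) + θ j ^ 2 - ϱ) • (E i * As * E j) := by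
      rw [mul_sub, sub_mul, key, keyϱ, sub_smul]
    rw [term]
    by_cases hn : (((i : Fin (d+1)) : ℤ) - ((j : Fin (d+1)) : ℤ)).natAbs = 1
    · have hij : (i : ℕ) + 1 = (j : ℕ) ∨ (j : ℕ) + 1 = (i : ℕ) := by omega
      rcases hij with hij | hij
      · have hj1 : 1 ≤ (j : ℕ) := by omega
        have hjd : (j : ℕ) ≤ d := by omega
        have hh := h (j : ℕ) hj1 hjd
        have e1 : (⟨(j : ℕ) - 1, by omega⟩ : Fin (d + 1)) = i := by
          apply Fin.ext; simp; omega
        have e2 : (⟨(j : ℕ), by omega⟩ : Fin (d + 1)) = j := by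
          apply Fin.ext; simp
        rw [e1, e2] at hh
        have : θ i ^ 2 - β * (θ i * θ j) + θ j ^ 2 - ϱ = 0 := by
          linear_combination hh
        rw [this, zero_smul]
      · have hi1 : 1 ≤ (i : ℕ) := by omega
        have hid : (i : ℕ) ≤ d := by omega
        have hh := h (i : ℕ) hi1 hid
        have e1 : (⟨(i : ℕ) - 1, by omega⟩ : Fin (d + 1)) = j := by
          apply Fin.ext; simp; omega
        have e2 : (⟨(i : ℕ), by omega⟩ : Fin (d + 1)) = i := by
          apply Fin.ext; simp
        rw [e1, e2] at hh
        have : θ i ^ 2 - β * (θ i * θ j) + θ j ^ 2 - ϱ = 0 := by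
          linear_combination hh
        rw [this, zero_smul]
    · rw [h0 i j hn, smul_zero]
end

section
/- Let F be a field, V a finite-dimensional F-vector space, and A, B, C ∈ End(V) satisfying AB − BA = z″ C for a nonzero scalar z″, where A, B satisfy A^2 B − 2ABA + BA^2 = ϱB and B^2 A − 2BAB + AB^2 = ϱ*A with z′z″ = −ϱ and z″z = −ϱ*. Then BC − CB = zA and CA − AC = z′B. -/
theorem stmt_15 {F V : Type*} [Field F] [AddCommGroup V] [Module F V]
    [FiniteDimensional F V]
    (ϱ ϱs z z' z'' : F) (hz'' : z'' ≠ 0)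
    (h1 : z' * z'' = -ϱ) (h2 : z'' * z = -ϱs)
    (A B C : Module.End F V)
    (hAW1 : A ^ 2 * B - (2 : F) • (A * B * A) + B * A ^ 2 = ϱ • B)
    (hAW2 : B ^ 2 * A - (2 : F) • (B * A * B) + A * B ^ 2 = ϱs • A)
    (hC : A * B - B * A = z'' • C) :
    B * C - C * B = z • A ∧ C * A - A * C = z' • B := by
  constructor
  · apply smul_right_injective (Module.End F V) hz''
    show z'' • (B * C - C * B) = z'' • (z • A)
    rw [smul_sub, ← mul_smul_comm, ← smul_mul_assoc, ← hC, smul_smul, h2,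
      neg_smul, ← hAW2]
    simp only [sub_mul, mul_sub, pow_two, two_smul, mul_assoc]
    abel
  · apply smul_right_injective (Module.End F V) hz''
    have h1' : z'' * z' = -ϱ := by rw [mul_comm]; exact h1
    show z'' • (C * A - A * C) = z'' • (z' • B)
    rw [smul_sub, ← smul_mul_assoc, ← mul_smul_comm, ← hC, smul_smul, h1',
      neg_smul, ← hAW1]
    simp only [sub_mul, mul_sub, pow_two, two_smul, mul_assoc]
    abel
end
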